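/- arXiv:1102.5008 — 2 statements merged into one kernel-verified Lean document; each statement's English description precedes it below -/
import Mathlib

section
/- Let Π be a Borel probability measure on 𝒫 and G₀ ∈ 𝒫. If G₀ lies in the weak support of Π (every open neighborhood of G₀ in the weak topology has positive Π-measure) and q_j(x; G₀) > 0 for every j ∈ {1, …, J} and every x ∈ 𝒳, then G₀ lies in the Kullback–Leibler support of Π: for every ε > 0, Π{G ∈ 𝒫 : ∫_𝒳 K(G₀, G | x) M(dx) < ε} > 0. -/
open MeasureTheory ProbabilityTheory Filter Real

noncomputable section

/-- The multinomial logit kernel `k_j(x, β)`. -/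
def mlogit {d J : ℕ} (j : Fin J) (x : Fin J → EuclideanSpace ℝ (Fin d))
    (β : EuclideanSpace ℝ (Fin d)) : ℝ :=
  Real.exp (inner ℝ (x j) β : ℝ) / ∑ l : Fin J, Real.exp (inner ℝ (x l) β : ℝ)

/-- Choice probability `q_j(x; G)`. -/
def choiceProb {d J : ℕ} (j : Fin J) (x : Fin J → EuclideanSpace ℝ (Fin d))
    (G : Measure (EuclideanSpace ℝ (Fin d))) : ℝ :=
  ∫ β, mlogit j x β ∂G

/-- The conditional Kullback–Leibler divergence
`K(G₀, G | x) = Σ_j q_j(x; G₀) log[q_j(x; G₀)/q_j(x; G)]`. -/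
def condKL {d J : ℕ} (G₀ G : Measure (EuclideanSpace ℝ (Fin d)))
    (x : Fin J → EuclideanSpace ℝ (Fin d)) : ℝ :=
  ∑ j : Fin J, choiceProb j x G₀ * Real.log (choiceProb j x G₀ / choiceProb j x G)

/-- `𝒫`, the space of Borel probability measures on `ℝ^d` with the topology of weak
convergence, equipped with its Borel σ-algebra. -/
instance {d : ℕ} : MeasurableSpace (ProbabilityMeasure (EuclideanSpace ℝ (Fin d))) :=
  borel _

/-!
Under weak convergence `G → G₀` each choice probability `q_j(x; G)` tends to `q_j(x; G₀)`,
because `β ↦ k_j(x, β)` is bounded and continuous; hence `K(G₀, G | x) → 0` for every `x`.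
To integrate this over `𝒳` one needs a lower bound on `q_j(x; G)`, uniform in `x ∈ 𝒳` and in
`G` near `G₀`: if `‖x_l‖ ≤ R` for all `l`, the kernel dominates the bounded continuous function
`β ↦ exp (-2R‖β‖) / J`, whose `G`-integral is continuous in `G` and positive at `G₀`.
Dominated convergence then makes `G ↦ ∫_𝒳 K(G₀, G | x) M(dx)` tend to `0` at `G₀`, so the
set where it is `< ε` contains a weakly open neighbourhood of `G₀`, which has positive prior
mass.
-/

open Topology BoundedContinuousFunction

section ChoiceProb

variable {d J : ℕ}

local notation "E" => EuclideanSpace ℝ (Fin d)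

lemma sum_exp_inner_pos [NeZero J] (x : Fin J → E) (β : E) :
    0 < ∑ l : Fin J, exp (inner ℝ (x l) β) :=
  Finset.sum_pos (fun _ _ => exp_pos _) Finset.univ_nonempty

lemma mlogit_pos [NeZero J] (j : Fin J) (x : Fin J → E) (β : E) : 0 < mlogit j x β :=
  div_pos (exp_pos _) (sum_exp_inner_pos x β)

lemma mlogit_le_one [NeZero J] (j : Fin J) (x : Fin J → E) (β : E) : mlogit j x β ≤ 1 := by
  rw [mlogit, div_le_one (sum_exp_inner_pos x β)]
  exact Finset.single_le_sum (f := fun l => exp (inner ℝ (x l) β))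
    (fun l _ => (exp_pos _).le) (Finset.mem_univ j)

lemma norm_mlogit_le_one [NeZero J] (j : Fin J) (x : Fin J → E) (β : E) :
    ‖mlogit j x β‖ ≤ 1 := by
  rw [norm_of_nonneg (mlogit_pos j x β).le]
  exact mlogit_le_one j x β

lemma continuous_mlogit [NeZero J] (j : Fin J) (x : Fin J → E) : Continuous (mlogit j x) :=
  Continuous.div (by fun_prop) (by fun_prop) fun β => (sum_exp_inner_pos x β).ne'

lemma continuous_mlogit_left [NeZero J] (j : Fin J) (β : E) :
    Continuous fun x : Fin J → E => mlogit j x β :=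
  Continuous.div (by fun_prop) (by fun_prop) fun x => (sum_exp_inner_pos x β).ne'

lemma exp_neg_mul_norm_div_le_mlogit [NeZero J] {R : ℝ} (j : Fin J) {x : Fin J → E}
    (hx : ∀ l, ‖x l‖ ≤ R) (β : E) :
    exp (-(2 * R * ‖β‖)) / J ≤ mlogit j x β := by
  have hinner : ∀ l, |inner ℝ (x l) β| ≤ R * ‖β‖ := fun l =>
    (abs_real_inner_le_norm _ _).trans (mul_le_mul_of_nonneg_right (hx l) (norm_nonneg β))
  have hsum : ∑ l : Fin J, exp (inner ℝ (x l) β) ≤ J * exp (R * ‖β‖) := by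
    calc ∑ l : Fin J, exp (inner ℝ (x l) β) ≤ ∑ _l : Fin J, exp (R * ‖β‖) :=
          Finset.sum_le_sum fun l _ => exp_le_exp.2 (abs_le.1 (hinner l)).2
      _ = J * exp (R * ‖β‖) := by simp
  calc exp (-(2 * R * ‖β‖)) / J = exp (-(R * ‖β‖)) / (J * exp (R * ‖β‖)) := by
        rw [div_mul_eq_div_div_swap, ← exp_sub]; ring_nf
    _ ≤ mlogit j x β :=
        div_le_div₀ (exp_pos _).le (exp_le_exp.2 (abs_le.1 (hinner j)).1)
          (sum_exp_inner_pos x β) hsum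

def mlogitBCF [NeZero J] (j : Fin J) (x : Fin J → E) : E →ᵇ ℝ :=
  .ofNormedAddCommGroup (mlogit j x) (continuous_mlogit j x) 1 (norm_mlogit_le_one j x)

lemma integrable_mlogit [NeZero J] (j : Fin J) (x : Fin J → E) (μ : Measure E)
    [IsFiniteMeasure μ] : Integrable (mlogit j x) μ :=
  (mlogitBCF j x).integrable μ

lemma choiceProb_le_one [NeZero J] (j : Fin J) (x : Fin J → E) (μ : Measure E)
    [IsProbabilityMeasure μ] : choiceProb j x μ ≤ 1 :=
  (integral_mono (integrable_mlogit j x μ) (integrable_const 1) (mlogit_le_one j x)).trans_eq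
    (by simp)

lemma continuous_choiceProb [NeZero J] (j : Fin J) (μ : Measure E) [IsProbabilityMeasure μ] :
    Continuous fun x : Fin J → E => choiceProb j x μ :=
  continuous_of_dominated (fun x => (continuous_mlogit j x).aestronglyMeasurable)
    (fun x => ae_of_all _ (norm_mlogit_le_one j x)) (integrable_const 1)
    (ae_of_all _ (continuous_mlogit_left j))

lemma continuous_choiceProb_probabilityMeasure [NeZero J] (j : Fin J) (x : Fin J → E) :
    Continuous fun G : ProbabilityMeasure E => choiceProb j x (G : Measure E) :=
  ProbabilityMeasure.continuous_integral_boundedContinuousFunction (mlogitBCF j x)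

lemma exists_pos_eventually_le_choiceProb [NeZero J] {𝒳 : Set (Fin J → E)}
    (h𝒳 : Bornology.IsBounded 𝒳) (G₀ : ProbabilityMeasure E) :
    ∃ c > 0, ∀ᶠ G : ProbabilityMeasure E in 𝓝 G₀,
      ∀ j, ∀ x ∈ 𝒳, c ≤ choiceProb j x (G : Measure E) := by
  obtain ⟨R, hR, h𝒳R⟩ := h𝒳.exists_pos_norm_le
  have hminorant_le_one : ∀ β : E, ‖exp (-(2 * R * ‖β‖)) / J‖ ≤ 1 := fun β => by
    have hJ : (1 : ℝ) ≤ J := Nat.one_le_cast.2 (Nat.pos_of_neZero J)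
    rw [norm_of_nonneg (by positivity), div_le_one (by positivity)]
    exact (exp_le_one_iff.2 (by nlinarith [norm_nonneg β])).trans hJ
  let g : E →ᵇ ℝ := .ofNormedAddCommGroup (fun β => exp (-(2 * R * ‖β‖)) / J) (by fun_prop)
    1 hminorant_le_one
  have hg_le : ∀ (G : ProbabilityMeasure E) j, ∀ x ∈ 𝒳,
      ∫ β, g β ∂(G : Measure E) ≤ choiceProb j x G := fun G j x hx =>
    integral_mono (g.integrable G) (integrable_mlogit j x G)
      (exp_neg_mul_norm_div_le_mlogit j fun l => (norm_le_pi_norm x l).trans (h𝒳R x hx))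
  have hg₀ : 0 < ∫ β, g β ∂(G₀ : Measure E) :=
    (integral_pos_iff_support_of_nonneg (fun β => by simp [g]; positivity)
      (g.integrable G₀)).2 (by simp [g, Function.support, exp_ne_zero, NeZero.ne])
  refine ⟨_, half_pos hg₀, ?_⟩
  have hg_cont := ProbabilityMeasure.continuous_integral_boundedContinuousFunction g
  filter_upwards [hg_cont.continuousAt.eventually (eventually_gt_nhds (half_lt_self hg₀))]
    with G hG j x hx
  exact hG.le.trans (hg_le G j x hx)

lemma abs_mul_log_div_le {c p q : ℝ} (hc : 0 < c) (hcp : c ≤ p) (hp1 : p ≤ 1) (hcq : c ≤ q)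
    (hq1 : q ≤ 1) : |p * log (p / q)| ≤ 2 * |log c| := by
  have hp : 0 < p := hc.trans_le hcp
  have hq : 0 < q := hc.trans_le hcq
  rw [abs_mul, abs_of_pos hp, log_div hp.ne' hq.ne',
    abs_of_nonpos (log_nonpos hc.le (hcp.trans hp1))]
  have hlogp := log_le_log hc hcp
  have hlogq := log_le_log hc hcq
  have hlogp_nonpos := log_nonpos hp.le hp1
  have hlogq_nonpos := log_nonpos hq.le hq1
  calc p * |log p - log q| ≤ 1 * |log p - log q| := by gcongr
    _ ≤ 2 * -log c := by rw [one_mul, abs_sub_le_iff]; constructor <;> linarith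

lemma abs_condKL_le [NeZero J] {c : ℝ} (hc : 0 < c) (G₀ G : Measure E)
    [IsProbabilityMeasure G₀] [IsProbabilityMeasure G] {x : Fin J → E}
    (h₀ : ∀ j, c ≤ choiceProb j x G₀) (h : ∀ j, c ≤ choiceProb j x G) :
    |condKL G₀ G x| ≤ J * (2 * |log c|) :=
  (Finset.abs_sum_le_sum_abs _ _).trans <|
    (Finset.sum_le_sum fun j _ => abs_mul_log_div_le hc (h₀ j) (choiceProb_le_one j x G₀) (h j)
      (choiceProb_le_one j x G)).trans_eq (by simp)

lemma measurable_condKL [NeZero J] (G₀ G : Measure E) [IsProbabilityMeasure G₀]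
    [IsProbabilityMeasure G] : Measurable fun x : Fin J → E => condKL G₀ G x := by
  unfold condKL
  exact Finset.measurable_sum _ fun j _ => (continuous_choiceProb j G₀).measurable.mul
    ((continuous_choiceProb j G₀).measurable.div (continuous_choiceProb j G).measurable).log

lemma tendsto_condKL_self [NeZero J] (G₀ : ProbabilityMeasure E) {x : Fin J → E}
    (hx : ∀ j, choiceProb j x (G₀ : Measure E) ≠ 0) :
    Tendsto (fun G : ProbabilityMeasure E => condKL (G₀ : Measure E) G x) (𝓝 G₀) (𝓝 0) := by
  unfold condKL
  have hterm : ∀ j, Tendsto (fun G : ProbabilityMeasure E =>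
      choiceProb j x (G₀ : Measure E) *
        log (choiceProb j x (G₀ : Measure E) / choiceProb j x (G : Measure E))) (𝓝 G₀) (𝓝 0) := by
    intro j
    have hq := (continuous_choiceProb_probabilityMeasure j x).tendsto G₀
    simpa [div_self (hx j)] using
      ((tendsto_const_nhds.div hq (hx j)).log (div_ne_zero (hx j) (hx j))).const_mul _
  simpa using tendsto_finsetSum Finset.univ fun j _ => hterm j

lemma tendsto_setIntegral_condKL [NeZero J] {𝒳 : Set (Fin J → E)}
    (h𝒳 : Bornology.IsBounded 𝒳) (h𝒳m : MeasurableSet 𝒳) (M : Measure (Fin J → E))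
    [IsFiniteMeasure M] (G₀ : ProbabilityMeasure E) :
    Tendsto (fun G : ProbabilityMeasure E => ∫ x in 𝒳, condKL (G₀ : Measure E) G x ∂M)
      (𝓝 G₀) (𝓝 0) := by
  obtain ⟨c, hc, hlower⟩ := exists_pos_eventually_le_choiceProb h𝒳 G₀
  have hlower₀ := hlower.self_of_nhds
  simpa using tendsto_integral_filter_of_dominated_convergence (μ := M.restrict 𝒳)
    (fun _ => J * (2 * |log c|))
    (.of_forall fun G => (measurable_condKL (G₀ : Measure E) G).aestronglyMeasurable)
    (hlower.mono fun G hG => ae_restrict_of_forall_mem h𝒳m fun x hx =>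
      abs_condKL_le hc _ _ (fun j => hlower₀ j x hx) (fun j => hG j x hx))
    (integrable_const _)
    (ae_restrict_of_forall_mem h𝒳m fun x hx =>
      tendsto_condKL_self G₀ fun j => (hc.trans_le (hlower₀ j x hx)).ne')

end ChoiceProb

theorem weak_support_implies_KL_support_general {d J : ℕ} (hJ : 2 ≤ J)
    (𝒳 : Set (Fin J → EuclideanSpace ℝ (Fin d))) (h𝒳 : IsCompact 𝒳)
    (M : Measure (Fin J → EuclideanSpace ℝ (Fin d))) [IsProbabilityMeasure M]
    (prior : Measure (ProbabilityMeasure (EuclideanSpace ℝ (Fin d))))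
    (G₀ : ProbabilityMeasure (EuclideanSpace ℝ (Fin d)))
    (hsupp : ∀ U : Set (ProbabilityMeasure (EuclideanSpace ℝ (Fin d))),
      IsOpen U → G₀ ∈ U → 0 < prior U) :
    ∀ ε > (0 : ℝ),
      0 < prior {G : ProbabilityMeasure (EuclideanSpace ℝ (Fin d)) |
        ∫ x in 𝒳, condKL (G₀ : Measure (EuclideanSpace ℝ (Fin d))) (G : Measure (EuclideanSpace ℝ (Fin d))) x ∂M < ε} := by
  have : NeZero J := ⟨by omega⟩
  intro ε hε
  have hKL := tendsto_setIntegral_condKL h𝒳.isBounded h𝒳.isClosed.measurableSet M G₀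
  obtain ⟨U, hU_sub, hU_open, hG₀U⟩ := mem_nhds_iff.1 (hKL (Iio_mem_nhds hε))
  exact (hsupp U hU_open hG₀U).trans_le (measure_mono hU_sub)

/-- if `G₀` is in the weak support of the prior and the choice probabilities
under `G₀` are positive on `𝒳`, then `G₀` is in the Kullback–Leibler support of the prior. -/
theorem weak_support_implies_KL_support {d J : ℕ} (hJ : 2 ≤ J)
    (𝒳 : Set (Fin J → EuclideanSpace ℝ (Fin d))) (h𝒳 : IsCompact 𝒳)
    (M : Measure (Fin J → EuclideanSpace ℝ (Fin d))) [IsProbabilityMeasure M]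
    (hM : M 𝒳ᶜ = 0)
    (prior : Measure (ProbabilityMeasure (EuclideanSpace ℝ (Fin d))))
    [IsProbabilityMeasure prior]
    (G₀ : ProbabilityMeasure (EuclideanSpace ℝ (Fin d)))
    (hsupp : ∀ U : Set (ProbabilityMeasure (EuclideanSpace ℝ (Fin d))),
      IsOpen U → G₀ ∈ U → 0 < prior U)
    (hpos : ∀ j : Fin J, ∀ x ∈ 𝒳, 0 < choiceProb j x G₀) :
    ∀ ε > (0 : ℝ),
      0 < prior {G : ProbabilityMeasure (EuclideanSpace ℝ (Fin d)) |
        ∫ x in 𝒳, condKL (G₀ : Measure (EuclideanSpace ℝ (Fin d))) (G : Measure (EuclideanSpace ℝ (Fin d))) x ∂M < ε} :=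
  weak_support_implies_KL_support_general hJ 𝒳 h𝒳 M prior G₀ hsupp
end
end

section
/- For every x = (x_1, …, x_J) ∈ (ℝ^d)^J, every j ∈ {1, …, J}, and all β₁, β₂ ∈ ℝ^d, the multinomial logit kernel satisfies the Lipschitz bound |k_j(x, β₁) − k_j(x, β₂)| ≤ K_x |β₁ − β₂|, where K_x = max_{1 ≤ i ≤ J} |x_j − x_i| and |·| denotes the Euclidean norm on ℝ^d. -/
open MeasureTheory Real

noncomputable section

/-!
Write `p = softmax s` for the scores `s_l = ⟪x_l, β₂⟫` and `c_l = ⟪x_l, β₁ - β₂⟫`. Then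
`softmax (s + c) j = p_j / E` with `E = ∑_l p_l e^{c_l - c_j}`, a convex combination of numbers in
`[e^{-K}, e^K]`, where `K = max_l |c_l - c_j| ≤ K_x ‖β₁ - β₂‖` by Cauchy–Schwarz. So `|log E| ≤ K`,
and since `p_j ≤ min 1 E`, the elementary inequalities `1 - 1/E ≤ log E ≤ E - 1` give
`|p_j / E - p_j| ≤ |log E|`.
-/

open Finset
open scoped InnerProductSpace

theorem abs_div_sub_self_le_abs_log {p E : ℝ} (hp : 0 ≤ p) (hp₁ : p ≤ 1) (hpE : p ≤ E) :
    |p / E - p| ≤ |log E| := by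
  rcases hp.eq_or_lt with rfl | hp₀
  · simp
  have hE : 0 < E := hp₀.trans_le hpE
  rcases le_total 1 E with h1 | h1
  · calc |p / E - p| = p * (1 - E⁻¹) := by
          rw [abs_of_nonpos (sub_nonpos.2 (div_le_self hp h1))]; ring
      _ ≤ 1 - E⁻¹ := mul_le_of_le_one_left (sub_nonneg.2 (inv_le_one_of_one_le₀ h1)) hp₁
      _ ≤ log E := one_sub_inv_le_log_of_pos hE
      _ ≤ |log E| := le_abs_self _
  · calc |p / E - p| = p / E * (1 - E) := by
          rw [abs_of_nonneg (sub_nonneg.2 (le_div_self hp hE h1))]; field_simp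
      _ ≤ 1 - E := mul_le_of_le_one_left (sub_nonneg.2 h1) ((div_le_one hE).2 hpE)
      _ ≤ -log E := by linarith [log_le_sub_one_of_pos hE]
      _ ≤ |log E| := neg_le_abs _

theorem abs_log_sum_mul_exp_le {ι : Type*} [Fintype ι] {w c : ι → ℝ} {K : ℝ}
    (hw : ∀ i, 0 ≤ w i) (hw₁ : ∑ i, w i = 1) (hc : ∀ i, |c i| ≤ K) :
    |log (∑ i, w i * exp (c i))| ≤ K := by
  have hlo : exp (-K) ≤ ∑ i, w i * exp (c i) :=
    calc exp (-K) = ∑ i, w i * exp (-K) := by rw [← sum_mul, hw₁, one_mul]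
      _ ≤ _ := sum_le_sum fun i _ =>
        mul_le_mul_of_nonneg_left (exp_le_exp.2 (neg_le_of_abs_le (hc i))) (hw i)
  have hhi : ∑ i, w i * exp (c i) ≤ exp K :=
    calc _ ≤ ∑ i, w i * exp K := sum_le_sum fun i _ =>
          mul_le_mul_of_nonneg_left (exp_le_exp.2 (le_of_abs_le (hc i))) (hw i)
      _ = exp K := by rw [← sum_mul, hw₁, one_mul]
  have hE := (exp_pos _).trans_le hlo
  exact abs_le.2 ⟨(le_log_iff_exp_le hE).2 hlo, (log_le_iff_le_exp hE).2 hhi⟩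

section Softmax

variable {ι : Type*} [Fintype ι]

def softmax (s : ι → ℝ) (j : ι) : ℝ :=
  exp (s j) / ∑ l, exp (s l)

theorem softmax_nonneg (s : ι → ℝ) (j : ι) : 0 ≤ softmax s j := by
  unfold softmax; positivity

theorem softmax_le_one (s : ι → ℝ) (j : ι) : softmax s j ≤ 1 :=
  div_le_one_of_le₀ (single_le_sum (fun l _ => (exp_pos (s l)).le) (mem_univ j))
    (sum_nonneg fun l _ => (exp_pos (s l)).le)

theorem sum_softmax [Nonempty ι] (s : ι → ℝ) : ∑ j, softmax s j = 1 := by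
  simp only [softmax, ← sum_div]
  exact div_self (sum_pos (fun l _ => exp_pos (s l)) univ_nonempty).ne'

theorem softmax_add_eq_div (s c : ι → ℝ) (j : ι) :
    softmax (s + c) j = softmax s j / ∑ l, softmax s l * exp (c l - c j) := by
  have hS : 0 < ∑ l, exp (s l) := sum_pos (fun l _ => exp_pos (s l)) ⟨j, mem_univ j⟩
  simp only [softmax, Pi.add_apply, exp_add, exp_sub, div_mul_div_comm, ← sum_div]
  field_simp

theorem abs_softmax_add_sub_softmax_le (s c : ι → ℝ) (j : ι) {K : ℝ}
    (hK : ∀ l, |c l - c j| ≤ K) : |softmax (s + c) j - softmax s j| ≤ K := by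
  have : Nonempty ι := ⟨j⟩
  have hle : softmax s j ≤ ∑ l, softmax s l * exp (c l - c j) := by
    simpa using single_le_sum (fun l _ => mul_nonneg (softmax_nonneg s l) (exp_pos _).le)
      (mem_univ j) (f := fun l => softmax s l * exp (c l - c j))
  rw [softmax_add_eq_div]
  exact (abs_div_sub_self_le_abs_log (softmax_nonneg s j) (softmax_le_one s j) hle).trans
    (abs_log_sum_mul_exp_le (softmax_nonneg s) (sum_softmax s) hK)

end Softmax

theorem mlogit_lipschitz_general {d J : ℕ}
    (x : Fin J → EuclideanSpace ℝ (Fin d)) (j : Fin J)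
    (β₁ β₂ : EuclideanSpace ℝ (Fin d)) :
    |mlogit j x β₁ - mlogit j x β₂| ≤
      (Finset.univ.sup' ⟨j, Finset.mem_univ j⟩ fun i => ‖x j - x i‖) * ‖β₁ - β₂‖ := by
  have hK : ∀ l, |⟪x l, β₁ - β₂⟫_ℝ - ⟪x j, β₁ - β₂⟫_ℝ| ≤
      (univ.sup' ⟨j, mem_univ j⟩ fun i => ‖x j - x i‖) * ‖β₁ - β₂‖ := fun l =>
    calc _ = |⟪x j - x l, β₁ - β₂⟫_ℝ| := by rw [abs_sub_comm, inner_sub_left]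
      _ ≤ ‖x j - x l‖ * ‖β₁ - β₂‖ := abs_real_inner_le_norm _ _
      _ ≤ _ := by gcongr; exact le_sup' (fun i => ‖x j - x i‖) (mem_univ l)
  have hscores : (fun l => ⟪x l, β₂⟫_ℝ) + (fun l => ⟪x l, β₁ - β₂⟫_ℝ) = fun l => ⟪x l, β₁⟫_ℝ := by
    ext l; simp [inner_sub_right]
  have := abs_softmax_add_sub_softmax_le (fun l => ⟪x l, β₂⟫_ℝ) _ j hK
  rwa [hscores] at this

/-- the multinomial logit kernel is Lipschitz in `β` with Lipschitz
constant `K_x = max_{1 ≤ i ≤ J} |x_j − x_i|`. -/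
theorem mlogit_lipschitz {d J : ℕ} (hJ : 2 ≤ J)
    (x : Fin J → EuclideanSpace ℝ (Fin d)) (j : Fin J)
    (β₁ β₂ : EuclideanSpace ℝ (Fin d)) :
    |mlogit j x β₁ - mlogit j x β₂| ≤
      (Finset.univ.sup' ⟨j, Finset.mem_univ j⟩ fun i => ‖x j - x i‖) * ‖β₁ - β₂‖ :=
  mlogit_lipschitz_general x j β₁ β₂

end
end
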